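/- Let 0 < δ ≤ r ≤ 1/2 and a, b ∈ ℝ, and set h = |b − a|. Then λ((𝒱 + a) ∩ (𝒱 + b) ∩ {(x,y) : δ ≤ y ≤ r}) equals log(r/δ) − h·(1/δ − 1/r) if h ≤ δ; equals log(r/h) − 1 + h/r if δ < h ≤ r; and equals 0 if h > r. Here 𝒱 + s denotes the horizontal translate {(x+s, y) : (x,y) ∈ 𝒱}. -/

import Mathlib

/-!
At height `y` the translates `htrans a Vset` and `htrans b Vset` meet in the interval
`[max a b - y/2, min a b + y/2]`, of length `y - |b - a|`; it is empty for `y < |b - a|`.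
By Fubini the hyperbolic area is therefore `∫ (y - |b - a|) / y² dy` over `[max δ |b - a|, r]`,
and `log y + |b - a| / y` is an antiderivative of the integrand.
-/

open MeasureTheory

/-- The hyperbolic area measure on the upper half-plane: density `1/y²` w.r.t. Lebesgue. -/
noncomputable def hypMeasure : Measure (ℝ × ℝ) :=
  volume.withDensity (fun p => ENNReal.ofReal (1 / p.2 ^ 2))

/-- The set 𝒱 = {(x,y) : y > 0, 2|x| ≤ y ≤ 1/2}. -/
def Vset : Set (ℝ × ℝ) :=
  {p | 0 < p.2 ∧ 2 * |p.1| ≤ p.2 ∧ p.2 ≤ 1 / 2}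

/-- Horizontal translate of a subset of the plane. -/
def htrans (s : ℝ) (A : Set (ℝ × ℝ)) : Set (ℝ × ℝ) := (fun p => (p.1 + s, p.2)) '' A

open Set

lemma mem_htrans_Vset {s : ℝ} {p : ℝ × ℝ} :
    p ∈ htrans s Vset ↔ 0 < p.2 ∧ 2 * |p.1 - s| ≤ p.2 ∧ p.2 ≤ 1 / 2 := by
  constructor
  · rintro ⟨q, hq, rfl⟩
    simpa [Vset] using hq
  · intro hp
    exact ⟨(p.1 - s, p.2), hp, by simp⟩

lemma hypMeasure_apply {S : Set (ℝ × ℝ)} (hS : MeasurableSet S) :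
    hypMeasure S = ∫⁻ y, volume ((fun x => (x, y)) ⁻¹' S) * ENNReal.ofReal (1 / y ^ 2) := by
  have hdens : Measurable fun y : ℝ => ENNReal.ofReal (1 / y ^ 2) := by fun_prop
  rw [hypMeasure, Measure.volume_eq_prod, ← prod_withDensity_right hdens,
    Measure.prod_apply_symm hS, lintegral_withDensity_eq_lintegral_mul _ hdens
      (measurable_measure_prodMk_right hS)]
  simp only [Pi.mul_apply, mul_comm]

lemma continuousOn_sub_div_sq (h : ℝ) : ContinuousOn (fun y : ℝ => (y - h) / y ^ 2) (Ioi 0) :=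
  ContinuousOn.div (by fun_prop) (by fun_prop) fun _ hy => (pow_pos hy 2).ne'

lemma integral_sub_div_sq {m r : ℝ} (hm : 0 < m) (hr : 0 < r) (h : ℝ) :
    ∫ y in m..r, (y - h) / y ^ 2 = Real.log (r / m) - h * (1 / m - 1 / r) := by
  have hpos : ∀ y ∈ uIcc m r, 0 < y := fun y hy => (lt_min hm hr).trans_le hy.1
  have hderiv : ∀ y ∈ uIcc m r,
      HasDerivAt (fun y => Real.log y + h * y⁻¹) ((y - h) / y ^ 2) y := by
    intro y hy
    have hy := (hpos y hy).ne'
    refine ((Real.hasDerivAt_log hy).add ((hasDerivAt_inv hy).const_mul h)).congr_deriv ?_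
    field_simp
    ring
  have hcont := (continuousOn_sub_div_sq h).mono hpos
  rw [intervalIntegral.integral_eq_sub_of_hasDerivAt hderiv hcont.intervalIntegrable,
    Real.log_div hr.ne' hm.ne']
  ring

lemma hypMeasure_trapezoid {m r c d : ℝ} (hm : 0 < m) (hmr : m ≤ r) (hcd : c - d ≤ m) :
    hypMeasure {p : ℝ × ℝ | m ≤ p.2 ∧ p.2 ≤ r ∧ c - p.2 / 2 ≤ p.1 ∧ p.1 ≤ d + p.2 / 2} =
      ENNReal.ofReal (Real.log (r / m) - (c - d) * (1 / m - 1 / r)) := by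
  set S : Set (ℝ × ℝ) := {p | m ≤ p.2 ∧ p.2 ≤ r ∧ c - p.2 / 2 ≤ p.1 ∧ p.1 ≤ d + p.2 / 2}
  have hS : MeasurableSet S :=
    (measurableSet_le measurable_const measurable_snd).inter <|
      (measurableSet_le measurable_snd measurable_const).inter <|
        (measurableSet_le (by fun_prop) measurable_fst).inter
          (measurableSet_le measurable_fst (by fun_prop))
  have hslice : ∀ y, volume ((fun x => (x, y)) ⁻¹' S) * ENNReal.ofReal (1 / y ^ 2) =
      (Icc m r).indicator (fun y => ENNReal.ofReal ((y - (c - d)) / y ^ 2)) y := by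
    intro y
    by_cases hy : y ∈ Icc m r
    · have hIcc : (fun x => (x, y)) ⁻¹' S = Icc (c - y / 2) (d + y / 2) := by
        ext x; simp [S, hy.1, hy.2]
      rw [hIcc, Real.volume_Icc, indicator_of_mem hy, ← ENNReal.ofReal_mul (by linarith [hy.1])]
      congr 1
      ring
    · have hempty : (fun x => (x, y)) ⁻¹' S = ∅ :=
        eq_empty_of_forall_notMem fun _ hx => hy ⟨hx.1, hx.2.1⟩
      rw [hempty, indicator_of_notMem hy, measure_empty, zero_mul]
  have hnonneg : ∀ y ∈ Icc m r, 0 ≤ (y - (c - d)) / y ^ 2 := fun y hy =>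
    div_nonneg (by linarith [hy.1]) (sq_nonneg y)
  have hint : IntegrableOn (fun y : ℝ => (y - (c - d)) / y ^ 2) (Icc m r) :=
    ((continuousOn_sub_div_sq _).mono fun _ hy => hm.trans_le hy.1).integrableOn_Icc
  rw [hypMeasure_apply hS, lintegral_congr hslice, lintegral_indicator measurableSet_Icc,
    ← ofReal_integral_eq_lintegral_ofReal hint ((ae_restrict_iff' measurableSet_Icc).mpr
      (.of_forall hnonneg)), integral_Icc_eq_integral_Ioc, ← intervalIntegral.integral_of_le hmr,
    integral_sub_div_sq hm (hm.trans_le hmr)]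

lemma abs_sub_le_and_abs_sub_le_iff {a b x t : ℝ} :
    |x - a| ≤ t ∧ |x - b| ≤ t ↔ max a b - t ≤ x ∧ x ≤ min a b + t := by
  rw [← max_sub_sub_right, ← min_add_add_right, max_le_iff, le_min_iff, abs_le, abs_le]
  constructor <;> rintro ⟨⟨_, _⟩, _, _⟩ <;> refine ⟨⟨?_, ?_⟩, ?_, ?_⟩ <;> linarith

lemma htrans_Vset_inter_htrans_Vset_inter_strip {δ r a b : ℝ} (hδ : 0 < δ) (hr : r ≤ 1 / 2) :
    htrans a Vset ∩ htrans b Vset ∩ {p | δ ≤ p.2 ∧ p.2 ≤ r} =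
      {p | max δ |b - a| ≤ p.2 ∧ p.2 ≤ r ∧ max a b - p.2 / 2 ≤ p.1 ∧ p.1 ≤ min a b + p.2 / 2} := by
  ext ⟨x, y⟩
  simp only [mem_inter_iff, mem_htrans_Vset, mem_ofPred_eq, max_le_iff,
    ← abs_sub_le_and_abs_sub_le_iff]
  have hba : |b - a| ≤ |x - a| + |x - b| := by
    simpa only [abs_sub_comm b x, add_comm] using abs_sub_le b x a
  constructor
  · rintro ⟨⟨⟨_, ha, _⟩, _, hb, _⟩, hδy, hyr⟩
    exact ⟨⟨hδy, by linarith⟩, hyr, by linarith, by linarith⟩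
  · rintro ⟨⟨hδy, _⟩, hyr, ha, hb⟩
    exact ⟨⟨⟨by linarith, by linarith, by linarith⟩, by linarith, by linarith, by linarith⟩,
      hδy, hyr⟩

theorem stmt3 (δ r a b : ℝ) (h1 : 0 < δ) (h2 : δ ≤ r) (h3 : r ≤ 1 / 2) :
    (|b - a| ≤ δ →
      hypMeasure (htrans a Vset ∩ htrans b Vset ∩ {p | δ ≤ p.2 ∧ p.2 ≤ r}) =
        ENNReal.ofReal (Real.log (r / δ) - |b - a| * (1 / δ - 1 / r))) ∧
    (δ < |b - a| → |b - a| ≤ r →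
      hypMeasure (htrans a Vset ∩ htrans b Vset ∩ {p | δ ≤ p.2 ∧ p.2 ≤ r}) =
        ENNReal.ofReal (Real.log (r / |b - a|) - 1 + |b - a| / r)) ∧
    (r < |b - a| →
      hypMeasure (htrans a Vset ∩ htrans b Vset ∩ {p | δ ≤ p.2 ∧ p.2 ≤ r}) = 0) := by
  have hwidth : max a b - min a b = |b - a| := max_sub_min_eq_abs a b
  rw [htrans_Vset_inter_htrans_Vset_inter_strip h1 h3]
  refine ⟨fun hδ => ?_, fun hδ hr => ?_, fun hr => ?_⟩
  · rw [max_eq_left hδ, hypMeasure_trapezoid h1 h2 (hwidth.trans_le hδ), hwidth]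
  · have hpos : 0 < |b - a| := h1.trans hδ
    rw [max_eq_right hδ.le, hypMeasure_trapezoid hpos hr hwidth.le, hwidth]
    congr 1
    field_simp
    ring
  · convert measure_empty (μ := hypMeasure)
    exact eq_empty_of_forall_notMem fun p hp => by linarith [hp.1, hp.2.1, le_max_right δ |b - a|]
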